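/- arXiv:1109.3296 — 2 statements merged into one kernel-verified Lean document; each statement's English description precedes it below -/
import Mathlib

section
/- Let x : I → EuclideanSpace ℝ n be a differentiable curve on an interval I satisfying x'(t) = X(x(t)) + v₀(x(t)) + w(x(t)) for all t ∈ I, where w is a vector field satisfying ⟪w(p), ∇G(p)⟫ = 0 and ⟪w(p), ∇F_i(p)⟫ = 0 for all p and all i, and X satisfies ⟪X(p), ∇G(p)⟫ = 0 for all p. Then the function t ↦ G(x(t)) is monotone nondecreasing on I. -/
open scoped RealInnerProductSpace

/-- The matrix `Σ^{(a₁,…,a_r)}_{(b₁,…,b_s)}` whose `(p,q)` entry is `⟪b_q, a_p⟫`. -/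
noncomputable def sigmaMat {V : Type*} [NormedAddCommGroup V] [InnerProductSpace ℝ V]
    {r s : ℕ} (a : Fin r → V) (b : Fin s → V) : Matrix (Fin r) (Fin s) ℝ :=
  Matrix.of fun p q => ⟪b q, a p⟫

/-- The standard control vector field at a point `p`, built from the gradients of
the `k+1` conserved quantities `F₀,…,F_k` and of the dissipated quantity `G`. -/
noncomputable def v0 {n : ℕ} {k : ℕ}
    (F : Fin (k+1) → EuclideanSpace ℝ (Fin n) → ℝ)
    (G : EuclideanSpace ℝ (Fin n) → ℝ)
    (p : EuclideanSpace ℝ (Fin n)) : EuclideanSpace ℝ (Fin n) :=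
  (∑ i : Fin (k+1),
    ((-1 : ℝ) ^ ((i : ℕ) + k + 1) *
      (sigmaMat (fun j => gradient (F j) p)
        (Fin.snoc (fun j => gradient (F (i.succAbove j)) p) (gradient G p))).det) •
      gradient (F i) p)
  + (sigmaMat (fun j => gradient (F j) p) (fun j => gradient (F j) p)).det • gradient G p

/-!
Along the curve, `d/dt G(x t) = ⟪x' t, ∇G(x t)⟫`. The fields `X` and `w` are orthogonal to `∇G`,
and expanding along the last row shows that `⟪v₀, ∇G⟫` is the Gram determinant of the
gradients `∇F i` followed by `∇G`, which is nonnegative. So `G ∘ x` has a nonnegative derivative on `I`.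
-/

lemma Fin.snoc_comp_castSucc_succAbove {α : Type*} {m : ℕ} (g : Fin (m + 1) → α) (c : α)
    (i : Fin (m + 1)) :
    (Fin.snoc g c : Fin (m + 2) → α) ∘ i.castSucc.succAbove = Fin.snoc (g ∘ i.succAbove) c := by
  funext q
  induction q using Fin.lastCases with
  | last => simp [Fin.succAbove_of_le_castSucc _ _ (Fin.castSucc_le_castSucc_iff.2 i.le_last)]
  | cast j => simp

section Gram

variable {V : Type*} [NormedAddCommGroup V] [InnerProductSpace ℝ V]

lemma sigmaMat_self_eq_gram {m : ℕ} (a : Fin m → V) : sigmaMat a a = Matrix.gram ℝ a := by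
  ext p q
  exact real_inner_comm _ _

lemma det_sigmaMat_self_nonneg {m : ℕ} (a : Fin m → V) : 0 ≤ (sigmaMat a a).det := by
  rw [sigmaMat_self_eq_gram]
  exact (Matrix.posSemidef_gram ℝ a).det_nonneg

-- Laplace expansion along the last row, the one belonging to `c`.
lemma det_sigmaMat_snoc_self {k : ℕ} (g : Fin (k + 1) → V) (c : V) :
    (sigmaMat (Fin.snoc g c) (Fin.snoc g c) : Matrix (Fin (k + 2)) _ ℝ).det =
      ⟪(∑ i : Fin (k + 1), ((-1 : ℝ) ^ ((i : ℕ) + k + 1) *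
          (sigmaMat g (Fin.snoc (g ∘ i.succAbove) c)).det) • g i)
        + (sigmaMat g g).det • c, c⟫ := by
  rw [Matrix.det_succ_row _ (Fin.last (k + 1)), Fin.sum_univ_castSucc, inner_add_left, sum_inner]
  congr 1
  · refine Finset.sum_congr rfl fun i _ => ?_
    have hminor : (sigmaMat (Fin.snoc g c) (Fin.snoc g c)).submatrix (Fin.last (k + 1)).succAbove
        i.castSucc.succAbove = sigmaMat g (Fin.snoc (g ∘ i.succAbove) c) := by
      rw [← Fin.snoc_comp_castSucc_succAbove]
      ext p q
      simp [sigmaMat]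
    rw [hminor, real_inner_smul_left]
    have hentry :
        sigmaMat (Fin.snoc g c) (Fin.snoc g c) (Fin.last (k + 1)) i.castSucc = ⟪g i, c⟫ := by
      simp [sigmaMat, real_inner_comm]
    rw [hentry, Fin.val_last, Fin.val_castSucc, add_comm (k + 1), ← add_assoc]
    ring
  · have hminor : (sigmaMat (Fin.snoc g c) (Fin.snoc g c)).submatrix (Fin.last (k + 1)).succAbove
        (Fin.last (k + 1)).succAbove = sigmaMat g g := by
      ext p q
      simp [sigmaMat]
    have hentry :
        sigmaMat (Fin.snoc g c) (Fin.snoc g c) (Fin.last (k + 1)) (Fin.last (k + 1)) = ⟪c, c⟫ := by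
      simp [sigmaMat]
    rw [hminor, hentry, real_inner_smul_left, Even.neg_one_pow ⟨_, rfl⟩]
    ring

end Gram

lemma inner_v0_gradient_nonneg {n k : ℕ} (F : Fin (k + 1) → EuclideanSpace ℝ (Fin n) → ℝ)
    (G : EuclideanSpace ℝ (Fin n) → ℝ) (p : EuclideanSpace ℝ (Fin n)) :
    0 ≤ ⟪v0 F G p, gradient G p⟫ := by
  have h := det_sigmaMat_self_nonneg (Fin.snoc (fun j => gradient (F j) p) (gradient G p))
  rwa [det_sigmaMat_snoc_self] at h

lemma HasGradientAt.comp_hasDerivAt {E : Type*} [NormedAddCommGroup E] [InnerProductSpace ℝ E]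
    [CompleteSpace E] {f : E → ℝ} {f' : E} {x : ℝ → E} {x' : E} {t : ℝ}
    (hf : HasGradientAt f f' (x t)) (hx : HasDerivAt x x' t) :
    HasDerivAt (fun s => f (x s)) ⟪f', x'⟫ t := by
  simpa [Function.comp_def] using hf.hasFDerivAt.comp_hasDerivAt t hx

lemma monotoneOn_comp_of_inner_gradient_nonneg {E : Type*} [NormedAddCommGroup E]
    [InnerProductSpace ℝ E] [CompleteSpace E] {f : E → ℝ} {x x' : ℝ → E} {I : Set ℝ}
    (hI : I.OrdConnected) (hf : ∀ t ∈ I, DifferentiableAt ℝ f (x t))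
    (hx : ∀ t ∈ I, HasDerivAt x (x' t) t) (hnonneg : ∀ t ∈ I, 0 ≤ ⟪x' t, gradient f (x t)⟫) :
    MonotoneOn (fun t => f (x t)) I := by
  have hderiv : ∀ t ∈ I, HasDerivAt (fun s => f (x s)) ⟪x' t, gradient f (x t)⟫ t := by
    intro t ht
    rw [real_inner_comm]
    exact (hf t ht).hasGradientAt.comp_hasDerivAt (hx t ht)
  refine monotoneOn_of_hasDerivWithinAt_nonneg hI.convex
    (fun t ht => (hderiv t ht).continuousAt.continuousWithinAt)
    (fun t ht => (hderiv t (interior_subset ht)).hasDerivWithinAt)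
    (fun t ht => hnonneg t (interior_subset ht))

theorem stmt_3_general {n k : ℕ}
    (F : Fin (k+1) → EuclideanSpace ℝ (Fin n) → ℝ)
    (G : EuclideanSpace ℝ (Fin n) → ℝ)
    (hG : Differentiable ℝ G)
    (X w : EuclideanSpace ℝ (Fin n) → EuclideanSpace ℝ (Fin n))
    (hwG : ∀ p, ⟪w p, gradient G p⟫ = 0)
    (hX : ∀ p, ⟪X p, gradient G p⟫ = 0)
    (I : Set ℝ) (hI : I.OrdConnected)
    (x : ℝ → EuclideanSpace ℝ (Fin n))
    (hx : ∀ t ∈ I, HasDerivAt x (X (x t) + v0 F G (x t) + w (x t)) t) :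
    MonotoneOn (fun t => G (x t)) I := by
  refine monotoneOn_comp_of_inner_gradient_nonneg hI (fun t _ => hG (x t)) hx fun t _ => ?_
  rw [inner_add_left, inner_add_left, hX, hwG, zero_add, add_zero]
  exact inner_v0_gradient_nonneg F G (x t)

theorem stmt_3 {n k : ℕ} (hn : 1 ≤ n)
    (F : Fin (k+1) → EuclideanSpace ℝ (Fin n) → ℝ)
    (G : EuclideanSpace ℝ (Fin n) → ℝ)
    (hF : ∀ i, Differentiable ℝ (F i)) (hG : Differentiable ℝ G)
    (X w : EuclideanSpace ℝ (Fin n) → EuclideanSpace ℝ (Fin n))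
    (hwG : ∀ p, ⟪w p, gradient G p⟫ = 0)
    (hwF : ∀ p, ∀ i, ⟪w p, gradient (F i) p⟫ = 0)
    (hX : ∀ p, ⟪X p, gradient G p⟫ = 0)
    (I : Set ℝ) (hI : I.OrdConnected)
    (x : ℝ → EuclideanSpace ℝ (Fin n))
    (hx : ∀ t ∈ I, HasDerivAt x (X (x t) + v0 F G (x t) + w (x t)) t) :
    MonotoneOn (fun t => G (x t)) I :=
  stmt_3_general F G hG X w hwG hX I hI x hx
end

section
/- Let x : I → EuclideanSpace ℝ n be a differentiable curve on an interval I satisfying x'(t) = X(x(t)) + v₀(x(t)) + w(x(t)) for all t ∈ I, where for a fixed s ∈ {1,…,k} the vector fields X and w satisfy ⟪X(p), ∇F_s(p)⟫ = 0 and ⟪w(p), ∇F_s(p)⟫ = 0 for all p. Then the function t ↦ F_s(x(t)) is constant on I; that is, F_s is a conserved quantity of the perturbed system ẋ = X(x) + v₀(x) + w(x). -/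
/-!
Along a solution, `d/dt F_s(x t) = ⟪x' t, ∇F_s(x t)⟫`, and the `X` and `w` contributions vanish
by hypothesis. The `v₀` contribution is the Laplace expansion, along the last row, of the
determinant of `Σ^{(∇F₁,…,∇F_k,∇F_s)}_{(∇F₁,…,∇F_k,∇G)}`, a matrix with a repeated row; so it
vanishes too, and a function with zero derivative on an interval is constant.
-/

open scoped RealInnerProductSpace

theorem Fin.snoc_castSucc_succAbove {α : Type*} {k : ℕ} (a : Fin (k+1) → α) (g : α)
    (i q : Fin (k+1)) :
    (Fin.snoc a g : Fin (k+2) → α) ((Fin.castSucc i).succAbove q) =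
      (Fin.snoc (fun j => a (i.succAbove j)) g : Fin (k+1) → α) q := by
  refine Fin.lastCases ?_ (fun q' => ?_) q
  · rw [Fin.succAbove_castSucc_of_le _ _ (Fin.le_last i), Fin.succ_last]
    simp
  · rcases lt_or_ge (Fin.castSucc q') i with h | h
    · rw [Fin.succAbove_castSucc_of_lt _ _ h, Fin.snoc_castSucc, Fin.snoc_castSucc,
        Fin.succAbove_of_castSucc_lt _ _ h]
    · rw [Fin.succAbove_castSucc_of_le _ _ h, Fin.succ_castSucc, Fin.snoc_castSucc,
        Fin.snoc_castSucc, Fin.succAbove_of_le_castSucc _ _ h]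

section sigmaMat

variable {V : Type*} [NormedAddCommGroup V] [InnerProductSpace ℝ V] {k : ℕ}

theorem det_sigmaMat_snoc_snoc (a : Fin (k+1) → V) (c g : V) :
    (sigmaMat (Fin.snoc a c) (Fin.snoc a g)).det =
      ∑ i : Fin (k+1), ((-1 : ℝ) ^ ((i : ℕ) + k + 1) *
          (sigmaMat a (Fin.snoc (fun j => a (i.succAbove j)) g)).det) * ⟪a i, c⟫
        + (sigmaMat a a).det * ⟪g, c⟫ := by
  rw [Matrix.det_succ_row _ (Fin.last (k+1)), Fin.sum_univ_castSucc]
  congr 1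
  · refine Finset.sum_congr rfl fun i _ => ?_
    have hminor : (sigmaMat (Fin.snoc a c) (Fin.snoc a g)).submatrix (Fin.last (k+1)).succAbove
        (Fin.castSucc i).succAbove = sigmaMat a (Fin.snoc (fun j => a (i.succAbove j)) g) := by
      ext p q
      simp only [Matrix.submatrix_apply, sigmaMat, Matrix.of_apply, Fin.succAbove_last_apply,
        Fin.snoc_castSucc, Fin.snoc_castSucc_succAbove a g i q]
    rw [hminor]
    simp only [sigmaMat, Matrix.of_apply, Fin.snoc_castSucc, Fin.snoc_last, Fin.val_last,
      Fin.val_castSucc]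
    ring_nf
  · have hminor : (sigmaMat (Fin.snoc a c) (Fin.snoc a g)).submatrix (Fin.last (k+1)).succAbove
        (Fin.last (k+1)).succAbove = sigmaMat a a := by
      ext p q
      simp [sigmaMat]
    have hsign : (-1 : ℝ) ^ ((k + 1) + (k + 1)) = 1 := (Even.add_self (k + 1)).neg_one_pow
    rw [hminor]
    simp only [sigmaMat, Matrix.of_apply, Fin.snoc_last, Fin.val_last, hsign]
    ring

theorem det_sigmaMat_snoc_self_snoc (a : Fin (k+1) → V) (s : Fin (k+1)) (g : V) :
    (sigmaMat (Fin.snoc a (a s)) (Fin.snoc a g)).det = 0 :=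
  Matrix.det_zero_of_row_eq (Fin.castSucc_lt_last s).ne <| funext fun q => by simp [sigmaMat]

end sigmaMat

theorem inner_v0_gradient {n k : ℕ} (F : Fin (k+1) → EuclideanSpace ℝ (Fin n) → ℝ)
    (G : EuclideanSpace ℝ (Fin n) → ℝ) (p : EuclideanSpace ℝ (Fin n)) (s : Fin (k+1)) :
    ⟪v0 F G p, gradient (F s) p⟫ = 0 := by
  rw [← det_sigmaMat_snoc_self_snoc (fun j => gradient (F j) p) s (gradient G p),
    det_sigmaMat_snoc_snoc, v0, inner_add_left, sum_inner, real_inner_smul_left]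
  simp only [real_inner_smul_left]

section conservation

variable {E : Type*} [NormedAddCommGroup E] [InnerProductSpace ℝ E]

theorem HasGradientAt.hasDerivAt_comp [CompleteSpace E] {f : E → ℝ} {f' : E} {x : ℝ → E}
    {x' : E} {t : ℝ} (hf : HasGradientAt f f' (x t)) (hx : HasDerivAt x x' t) :
    HasDerivAt (fun t => f (x t)) ⟪f', x'⟫ t := by
  have h := hf.hasFDerivAt.comp_hasDerivAt t hx
  simp only [InnerProductSpace.toDual_apply_apply] at h
  exact h

theorem Set.OrdConnected.eq_of_hasDerivWithinAt_eq_zero {f : ℝ → E} {I : Set ℝ}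
    (hI : I.OrdConnected) (hf : ∀ t ∈ I, HasDerivWithinAt f 0 I t) :
    ∀ t₁ ∈ I, ∀ t₂ ∈ I, f t₁ = f t₂ := by
  intro t₁ h₁ t₂ h₂
  have h := hI.convex.norm_image_sub_le_of_norm_hasDerivWithin_le hf (fun _ _ => norm_zero.le)
    h₂ h₁
  rw [zero_mul, norm_le_zero_iff, sub_eq_zero] at h
  exact h

theorem eq_of_inner_gradient_eq_zero_of_hasDerivAt [CompleteSpace E] {F : E → ℝ}
    (hF : Differentiable ℝ F) {V : E → E} (hV : ∀ p, ⟪V p, gradient F p⟫ = 0) {I : Set ℝ}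
    (hI : I.OrdConnected) {x : ℝ → E} (hx : ∀ t ∈ I, HasDerivAt x (V (x t)) t) :
    ∀ t₁ ∈ I, ∀ t₂ ∈ I, F (x t₁) = F (x t₂) := by
  refine hI.eq_of_hasDerivWithinAt_eq_zero fun t ht => ?_
  have h := (hF (x t)).hasGradientAt.hasDerivAt_comp (hx t ht)
  rw [real_inner_comm, hV] at h
  exact h.hasDerivWithinAt

end conservation

theorem stmt_4_general {n k : ℕ}
    (F : Fin (k+1) → EuclideanSpace ℝ (Fin n) → ℝ)
    (G : EuclideanSpace ℝ (Fin n) → ℝ)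
    (hF : ∀ i, Differentiable ℝ (F i))
    (X w : EuclideanSpace ℝ (Fin n) → EuclideanSpace ℝ (Fin n))
    (s : Fin (k+1))
    (hXs : ∀ p, ⟪X p, gradient (F s) p⟫ = 0)
    (hws : ∀ p, ⟪w p, gradient (F s) p⟫ = 0)
    (I : Set ℝ) (hI : I.OrdConnected)
    (x : ℝ → EuclideanSpace ℝ (Fin n))
    (hx : ∀ t ∈ I, HasDerivAt x (X (x t) + v0 F G (x t) + w (x t)) t) :
    ∀ t₁ ∈ I, ∀ t₂ ∈ I, F s (x t₁) = F s (x t₂) := by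
  refine eq_of_inner_gradient_eq_zero_of_hasDerivAt (V := fun p => X p + v0 F G p + w p) (hF s)
    (fun p => ?_) hI hx
  rw [inner_add_left, inner_add_left, hXs, inner_v0_gradient, hws, add_zero, add_zero]

theorem stmt_4 {n k : ℕ} (hn : 1 ≤ n)
    (F : Fin (k+1) → EuclideanSpace ℝ (Fin n) → ℝ)
    (G : EuclideanSpace ℝ (Fin n) → ℝ)
    (hF : ∀ i, Differentiable ℝ (F i)) (hG : Differentiable ℝ G)
    (X w : EuclideanSpace ℝ (Fin n) → EuclideanSpace ℝ (Fin n))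
    (s : Fin (k+1))
    (hXs : ∀ p, ⟪X p, gradient (F s) p⟫ = 0)
    (hws : ∀ p, ⟪w p, gradient (F s) p⟫ = 0)
    (I : Set ℝ) (hI : I.OrdConnected)
    (x : ℝ → EuclideanSpace ℝ (Fin n))
    (hx : ∀ t ∈ I, HasDerivAt x (X (x t) + v0 F G (x t) + w (x t)) t) :
    ∀ t₁ ∈ I, ∀ t₂ ∈ I, F s (x t₁) = F s (x t₂) :=
  stmt_4_general F G hF X w s hXs hws I hI x hx
end
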